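/- arXiv:math/0702478 — 2 statements merged into one kernel-verified Lean document; each statement's English description precedes it below -/
import Mathlib

section
/- Let K be a field and let α, β ∈ ℕ^{2ℓ}. Then ψ₀([α] − [β]) = 0 if and only if both of the following hold: (i) α_i + α_{2ℓ+1−i} = β_i + β_{2ℓ+1−i} for all i = 1,…,ℓ, and (ii) ∑_{i=ℓ+1}^{2ℓ} ζ_i·α_i = ∑_{i=ℓ+1}^{2ℓ} ζ_i·β_i. -/
open MvPolynomial

noncomputable section

/-- Index in `Fin (2*ℓ)` of the coefficient `a_k` (0-indexed position `k`). -/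
def aIdx (l : ℕ) (k : Fin l) : Fin (2 * l) :=
  ⟨(k : ℕ), by have := k.isLt; omega⟩

/-- Index in `Fin (2*ℓ)` of the coefficient `b_k` (0-indexed position `2ℓ-1-k`),
    matching the ordering `(a₁,…,a_ℓ, b_ℓ,…,b₁)`. -/
def bIdx (l : ℕ) (k : Fin l) : Fin (2 * l) :=
  ⟨2 * l - 1 - (k : ℕ), by have := k.isLt; omega⟩

/-- The vector `ζ = (p₁−q₁, …, p_ℓ−q_ℓ, q_ℓ−p_ℓ, …, q₁−p₁)`. -/
def zeta {l : ℕ} (p : Fin l → ℤ) (q : Fin l → ℕ) : Fin (2 * l) → ℤ := fun i =>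
  if h : (i : ℕ) < l then p ⟨(i : ℕ), h⟩ - (q ⟨(i : ℕ), h⟩ : ℤ)
  else (q ⟨2 * l - 1 - (i : ℕ), by have := i.isLt; omega⟩ : ℤ) -
    p ⟨2 * l - 1 - (i : ℕ), by have := i.isLt; omega⟩

/-- Dot product of an integer vector with a vector of natural numbers. -/
def zdot {n : ℕ} (z : Fin n → ℤ) (v : Fin n → ℕ) : ℤ := ∑ i, z i * (v i : ℤ)

/-- Reversal (involution) of a vector: `ν̂ = (ν_{2ℓ}, …, ν₁)`. -/
def revVec {n : ℕ} {α : Type*} (v : Fin n → α) : Fin n → α := fun i => v i.rev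

/-- The monomial `[ν] = a₁^{ν₁}⋯a_ℓ^{ν_ℓ}·b_ℓ^{ν_{ℓ+1}}⋯b₁^{ν_{2ℓ}}` in the
    polynomial ring in `2ℓ` variables. -/
def monX {K : Type*} [CommSemiring K] {n : ℕ} (v : Fin n → ℕ) :
    MvPolynomial (Fin n) K :=
  ∏ i, (X i) ^ (v i)

/-- Time-reversibility of the coefficient vector `x = (a,b)`: there is `γ ≠ 0`
    with `b_k = γ^{p_k−q_k}·a_k` for all `k`. -/
def TimeRev {K : Type*} [Field K] {l : ℕ} (p : Fin l → ℤ) (q : Fin l → ℕ)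
    (x : Fin (2 * l) → K) : Prop :=
  ∃ γ : K, γ ≠ 0 ∧ ∀ k : Fin l, x (bIdx l k) = γ ^ (p k - (q k : ℤ)) * x (aIdx l k)

/-- The Sibirsky ideal `I_S = ⟨[ν] − [ν̂] : ν ∈ M⟩`. -/
def sibirsky (K : Type*) [CommRing K] {l : ℕ} (p : Fin l → ℤ) (q : Fin l → ℕ) :
    Ideal (MvPolynomial (Fin (2 * l)) K) :=
  Ideal.span {f | ∃ v : Fin (2 * l) → ℕ,
    zdot (zeta p q) v = 0 ∧ f = monX v - monX (revVec v)}

/-- The homomorphism `ψ₀ : K[a₁,…,a_ℓ,b_ℓ,…,b₁] → K(γ,t₁,…,t_ℓ)`,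
    `a_k ↦ t_k`, `b_k ↦ γ^{p_k−q_k}·t_k`; here `γ` is the image of `X 0` and
    `t_k` the image of `X k.succ` in the fraction field of `K[X₀,…,X_ℓ]`. -/
def psi0 {K : Type*} [Field K] {l : ℕ} (p : Fin l → ℤ) (q : Fin l → ℕ) :
    MvPolynomial (Fin (2 * l)) K →ₐ[K] FractionRing (MvPolynomial (Fin (l + 1)) K) :=
  aeval fun i =>
    if h : (i : ℕ) < l then
      algebraMap (MvPolynomial (Fin (l + 1)) K)
        (FractionRing (MvPolynomial (Fin (l + 1)) K)) (X (Fin.succ ⟨(i : ℕ), h⟩))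
    else
      (algebraMap (MvPolynomial (Fin (l + 1)) K)
          (FractionRing (MvPolynomial (Fin (l + 1)) K)) (X 0)) ^
        (p ⟨2 * l - 1 - (i : ℕ), by have := i.isLt; omega⟩ -
          (q ⟨2 * l - 1 - (i : ℕ), by have := i.isLt; omega⟩ : ℤ)) *
      algebraMap (MvPolynomial (Fin (l + 1)) K)
        (FractionRing (MvPolynomial (Fin (l + 1)) K))
        (X (Fin.succ ⟨2 * l - 1 - (i : ℕ), by have := i.isLt; omega⟩))

/-- The linear map `U_η`, multiplying the coordinate `a_k` by `η^{q_k−p_k}` and the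
    coordinate `b_k` by `η^{p_k−q_k}`. -/
def Ueta {K : Type*} [Field K] {l : ℕ} (p : Fin l → ℤ) (q : Fin l → ℕ) (η : K)
    (x : Fin (2 * l) → K) : Fin (2 * l) → K := fun i =>
  if h : (i : ℕ) < l then η ^ ((q ⟨(i : ℕ), h⟩ : ℤ) - p ⟨(i : ℕ), h⟩) * x i
  else η ^ (p ⟨2 * l - 1 - (i : ℕ), by have := i.isLt; omega⟩ -
    (q ⟨2 * l - 1 - (i : ℕ), by have := i.isLt; omega⟩ : ℤ)) * x i

/-- The orbit of `x` under the group `{U_η : η ≠ 0}`. -/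
def orbitU {K : Type*} [Field K] {l : ℕ} (p : Fin l → ℤ) (q : Fin l → ℕ)
    (x : Fin (2 * l) → K) : Set (Fin (2 * l) → K) :=
  {y | ∃ η : K, η ≠ 0 ∧ y = Ueta p q η x}

/-!
`ψ₀` sends `[ν]` to the Laurent monomial `γ^{Σₖ (pₖ - qₖ) ν_{bₖ}} ∏ₖ tₖ^{ν_{aₖ} + ν_{bₖ}}`, so
`ψ₀([α] - [β]) = 0` says that two Laurent monomials in `γ, t₁, …, t_ℓ` coincide. Distinct
Laurent monomials are distinct rational functions (after multiplying by a common monomial this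
is the injectivity of `ν ↦ [ν]`), so this happens iff the exponents agree, i.e. iff (i) and (ii)
hold, using `ζ_{bₖ} = qₖ - pₖ`.
-/

lemma zpow_sum₀ {G₀ ι : Type*} [CommGroupWithZero G₀] {a : G₀} (ha : a ≠ 0) (s : Finset ι)
    (f : ι → ℤ) : a ^ (∑ i ∈ s, f i) = ∏ i ∈ s, a ^ f i := by
  classical
  induction s using Finset.induction_on with
  | empty => simp
  | insert i s hi ih => rw [Finset.sum_insert hi, Finset.prod_insert hi, zpow_add₀ ha, ih]

section Monomial

variable {R : Type*} [CommSemiring R] {n : ℕ}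

lemma monX_eq_monomial (v : Fin n → ℕ) :
    (monX v : MvPolynomial (Fin n) R) = monomial (Finsupp.equivFunOnFinite.symm v) 1 := by
  rw [monomial_eq, C_1, one_mul, Finsupp.prod_fintype _ _ fun i => pow_zero _]
  rfl

lemma monX_injective [Nontrivial R] :
    Function.Injective (monX : (Fin n → ℕ) → MvPolynomial (Fin n) R) := fun v w h => by
  simpa using monomial_left_injective one_ne_zero
    ((monX_eq_monomial v).symm.trans (h.trans (monX_eq_monomial w)))

end Monomial

section LaurentMonomial

variable {R : Type*} [CommRing R] [IsDomain R] {n : ℕ}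

lemma algebraMap_X_ne_zero (i : Fin n) :
    algebraMap (MvPolynomial (Fin n) R) (FractionRing (MvPolynomial (Fin n) R)) (X i) ≠ 0 :=
  (map_ne_zero_iff _ (IsFractionRing.injective _ _)).2 (X_ne_zero i)

variable (R) in
def laurentMon (c : Fin n → ℤ) : FractionRing (MvPolynomial (Fin n) R) :=
  ∏ i, algebraMap (MvPolynomial (Fin n) R) _ (X i) ^ c i

lemma laurentMon_add (c d : Fin n → ℤ) :
    laurentMon R (c + d) = laurentMon R c * laurentMon R d := by
  rw [laurentMon, laurentMon, laurentMon, ← Finset.prod_mul_distrib]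
  exact Finset.prod_congr rfl fun i _ => zpow_add₀ (algebraMap_X_ne_zero i) _ _

lemma laurentMon_natCast (v : Fin n → ℕ) :
    laurentMon R (fun i => (v i : ℤ)) = algebraMap (MvPolynomial (Fin n) R) _ (monX v) := by
  simp only [laurentMon, monX, map_prod, map_pow, zpow_natCast]

lemma laurentMon_injective : Function.Injective (laurentMon R (n := n)) := by
  intro c d h
  set N : Fin n → ℤ := fun i => ((-c i).toNat + (-d i).toNat : ℕ)
  have hshift : ∀ e : Fin n → ℤ, (∀ i, 0 ≤ e i + N i) →
      e + N = fun i => ((e i + N i).toNat : ℤ) :=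
    fun e he => funext fun i => (Int.toNat_of_nonneg (he i)).symm
  have hL : laurentMon R (c + N) = laurentMon R (d + N) := by
    rw [laurentMon_add, laurentMon_add, h]
  rw [hshift c (fun i => by simp only [N]; omega), hshift d (fun i => by simp only [N]; omega),
    laurentMon_natCast, laurentMon_natCast] at hL
  have hmon := monX_injective (IsFractionRing.injective _ _ hL)
  funext i
  have := congrFun hmon i
  simp only [N] at this
  omega

lemma laurentMon_cons (m : ℤ) (d : Fin n → ℤ) :
    laurentMon R (Fin.cons m d) =
      algebraMap (MvPolynomial (Fin (n + 1)) R) _ (X 0) ^ m *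
        ∏ k : Fin n, algebraMap (MvPolynomial (Fin (n + 1)) R) _ (X k.succ) ^ d k := by
  simp only [laurentMon, Fin.prod_univ_succ, Fin.cons_zero, Fin.cons_succ]

end LaurentMonomial

section Psi0

variable {l : ℕ}

lemma prod_eq_prod_aIdx_mul_prod_bIdx {M : Type*} [CommMonoid M] (f : Fin (2 * l) → M) :
    ∏ i, f i = (∏ k, f (aIdx l k)) * ∏ k, f (bIdx l k) := by
  rw [← Fin.prod_congr' f (two_mul l).symm, Fin.prod_univ_add]
  congr 1
  exact Fintype.prod_equiv Fin.revPerm _ _ fun k => congrArg f (Fin.ext (by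
    simp only [Fin.natAdd_eq_addNat, Fin.val_cast, Fin.val_addNat, bIdx, Fin.revPerm_apply,
      Fin.val_rev]
    omega))

variable {K : Type*} [Field K] (p : Fin l → ℤ) (q : Fin l → ℕ)

lemma psi0_X_aIdx (k : Fin l) :
    psi0 (K := K) p q (X (aIdx l k)) =
      algebraMap (MvPolynomial (Fin (l + 1)) K) _ (X k.succ) := by
  rw [psi0, aeval_X, aIdx, dif_pos k.isLt]

lemma psi0_X_bIdx (k : Fin l) :
    psi0 (K := K) p q (X (bIdx l k)) =
      algebraMap (MvPolynomial (Fin (l + 1)) K) _ (X 0) ^ (p k - q k) *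
        algebraMap (MvPolynomial (Fin (l + 1)) K) _ (X k.succ) := by
  have hk : 2 * l - 1 - (2 * l - 1 - (k : ℕ)) = k := by omega
  rw [psi0, aeval_X, bIdx, dif_neg (by dsimp only; omega)]
  simp only [hk, Fin.eta]

lemma psi0_monX (v : Fin (2 * l) → ℕ) :
    psi0 (K := K) p q (monX v) = laurentMon K (Fin.cons (∑ k, (p k - q k) * (v (bIdx l k) : ℤ))
      fun k => ((v (aIdx l k) + v (bIdx l k) : ℕ) : ℤ)) := by
  rw [monX, map_prod, prod_eq_prod_aIdx_mul_prod_bIdx, laurentMon_cons,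
    zpow_sum₀ (algebraMap_X_ne_zero 0)]
  simp only [map_pow, psi0_X_aIdx, psi0_X_bIdx, mul_pow, Finset.prod_mul_distrib, zpow_mul,
    zpow_natCast, pow_add]
  exact mul_left_comm _ _ _

lemma zeta_bIdx (k : Fin l) : zeta p q (bIdx l k) = -(p k - q k) := by
  have hk : 2 * l - 1 - (2 * l - 1 - (k : ℕ)) = k := by omega
  rw [zeta, dif_neg (by simp only [bIdx, not_lt]; omega)]
  simp [bIdx, hk]

end Psi0

theorem stmt8_general {K : Type*} [Field K] {l : ℕ} (p : Fin l → ℤ) (q : Fin l → ℕ)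
    (α β : Fin (2 * l) → ℕ) :
    psi0 (K := K) p q (monX α - monX β) = 0 ↔
      ((∀ k : Fin l, α (aIdx l k) + α (bIdx l k) = β (aIdx l k) + β (bIdx l k)) ∧
        ∑ k : Fin l, zeta p q (bIdx l k) * (α (bIdx l k) : ℤ) =
          ∑ k : Fin l, zeta p q (bIdx l k) * (β (bIdx l k) : ℤ)) := by
  rw [map_sub, sub_eq_zero, psi0_monX, psi0_monX, laurentMon_injective.eq_iff, Fin.cons_inj,
    and_comm, funext_iff]
  simp only [zeta_bIdx, neg_mul, Finset.sum_neg_distrib, neg_inj, Nat.cast_inj]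

theorem stmt8 {K : Type*} [Field K] {l : ℕ} (hl : 0 < l) (p : Fin l → ℤ) (q : Fin l → ℕ)
    (hp : ∀ k, -1 ≤ p k) (hpq : ∀ k, 0 ≤ p k + (q k : ℤ))
    (hdist : Function.Injective fun k => (p k, q k))
    (α β : Fin (2 * l) → ℕ) :
    psi0 (K := K) p q (monX α - monX β) = 0 ↔
      ((∀ k : Fin l, α (aIdx l k) + α (bIdx l k) = β (aIdx l k) + β (bIdx l k)) ∧
        ∑ k : Fin l, zeta p q (bIdx l k) * (α (bIdx l k) : ℤ) =
          ∑ k : Fin l, zeta p q (bIdx l k) * (β (bIdx l k) : ℤ)) :=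
  stmt8_general p q α β
end
end

section
/- The variety V(I_S) ⊆ ℂ^{2ℓ} of the Sibirsky ideal is the Zariski closure of the union of all orbits of the group {U_η} that are invariant under the involution; equivalently, the closure in the Zariski topology of ℂ^{2ℓ} of the set {x ∈ ℂ^{2ℓ} : the orbit of x is invariant under the involution} equals V(I_S). -/
open MvPolynomial

noncomputable section

/-!
`[ν](U_η y) = η^(-ζ·ν) [ν](y)`, and the orbit of `y` is invariant under the involution iff
`ŷ = U_η y` for some `η ≠ 0`. At such a point `[ν̂](y) = [ν](ŷ) = [ν](y)` whenever
`ζ·ν = 0`, so `I_S` vanishes on every invariant orbit.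

Conversely, the points `y_i = γ^(ζ_i⁺) t_i t_î` with `γ ≠ 0` satisfy `ŷ = U_γ y`. A polynomial
vanishing at all of them is killed by the monomial substitution `X_i ↦ X_γ^(ζ_i⁺) X_i X_î`, so its
coefficients sum to zero over each fibre of the induced map on exponents. Such a fibre is
determined by `ζ·ν` and the sums `ν_i + ν_î`, and two monomials with the same data differ by an
element of `I_S`: `[ν] - [μ] = [ν ⊓ μ] ([w] - [ŵ])` with `w = ν - μ` and `ζ·w = 0`.
Hence such a polynomial lies in `I_S`, and both sets of polynomials cut out the same variety.
-/

namespace MvPolynomial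

variable {R σ τ : Type*} [CommRing R]

theorem mem_ideal_of_sum_coeff_fiber_eq_zero {β : Type*} [DecidableEq β]
    {I : Ideal (MvPolynomial σ R)} (g : (σ →₀ ℕ) → β)
    (hI : ∀ d d', g d = g d' → monomial d (1 : R) - monomial d' 1 ∈ I)
    {f : MvPolynomial σ R} (hf : ∀ b, ∑ d ∈ f.support with g d = b, coeff d f = 0) :
    f ∈ I := by
  set r := Function.invFun g
  have hzero : ∑ d ∈ f.support, monomial (r (g d)) (coeff d f) = 0 := by
    rw [← Finset.sum_fiberwise_of_maps_to fun d hd => Finset.mem_image_of_mem g hd]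
    refine Finset.sum_eq_zero fun b _ => ?_
    rw [Finset.sum_congr rfl fun d hd => by rw [(Finset.mem_filter.1 hd).2], ← map_sum, hf b,
      map_zero]
  have hsplit : f = ∑ d ∈ f.support, C (coeff d f) * (monomial d 1 - monomial (r (g d)) 1) +
      ∑ d ∈ f.support, monomial (r (g d)) (coeff d f) := by
    simp only [mul_sub, C_mul_monomial, mul_one, Finset.sum_sub_distrib, sub_add_cancel]
    exact f.as_sum
  rw [hsplit, hzero, add_zero]
  exact Ideal.sum_mem _ fun d _ =>
    I.mul_mem_left _ (hI d (r (g d)) (Function.invFun_eq ⟨d, rfl⟩).symm)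

theorem bind₁_monomial_one_monomial (e : σ → τ →₀ ℕ) (d : σ →₀ ℕ) (c : R) :
    bind₁ (fun i => monomial (e i) (1 : R)) (monomial d c) =
      monomial (Finsupp.linearCombination ℕ e d) c := by
  rw [bind₁_monomial, Finsupp.linearCombination_apply, monomial_finsupp_sum_index]
  simp only [monomial_pow, one_pow]
  rfl

theorem coeff_bind₁_monomial_one [DecidableEq τ] (e : σ → τ →₀ ℕ) (f : MvPolynomial σ R)
    (m : τ →₀ ℕ) :
    coeff m (bind₁ (fun i => monomial (e i) (1 : R)) f) =
      ∑ d ∈ f.support with Finsupp.linearCombination ℕ e d = m, coeff d f := by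
  conv_lhs => rw [f.as_sum]
  simp only [map_sum, coeff_sum, bind₁_monomial_one_monomial, coeff_monomial,
    Finset.sum_filter]

theorem mem_ideal_of_bind₁_monomial_one_eq_zero {I : Ideal (MvPolynomial σ R)}
    (e : σ → τ →₀ ℕ)
    (hI : ∀ d d', Finsupp.linearCombination ℕ e d = Finsupp.linearCombination ℕ e d' →
      monomial d (1 : R) - monomial d' 1 ∈ I)
    {f : MvPolynomial σ R} (hf : bind₁ (fun i => monomial (e i) (1 : R)) f = 0) : f ∈ I := by
  classical
  refine mem_ideal_of_sum_coeff_fiber_eq_zero _ hI fun m => ?_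
  rw [← coeff_bind₁_monomial_one, hf, coeff_zero]

theorem eval_bind₁ (x : τ → R) (g : σ → MvPolynomial τ R) (f : MvPolynomial σ R) :
    eval x (bind₁ g f) = eval (fun i => eval x (g i)) f :=
  eval₂Hom_bind₁ _ _ _ _

end MvPolynomial

theorem Finset.prod_zpow_eq_zpow_sum₀ {G ι : Type*} [CommGroupWithZero G] {a : G} (ha : a ≠ 0)
    (s : Finset ι) (f : ι → ℤ) : ∏ i ∈ s, a ^ f i = a ^ ∑ i ∈ s, f i := by
  classical
  induction s using Finset.induction with
  | empty => simp
  | insert i s hi ih => rw [Finset.prod_insert hi, Finset.sum_insert hi, zpow_add₀ ha, ih]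

theorem zpow_toNat_neg {G : Type*} [GroupWithZero G] {a : G} (ha : a ≠ 0) (m : ℤ) :
    a ^ (-m).toNat = a ^ (-m) * a ^ m.toNat := by
  rw [← zpow_natCast, ← zpow_natCast, ← zpow_add₀ ha]
  congr 1
  omega

section Monomials

variable {n : ℕ}

theorem zdot_add (z : Fin n → ℤ) (u v : Fin n → ℕ) : zdot z (u + v) = zdot z u + zdot z v := by
  simp [zdot, mul_add, Finset.sum_add_distrib]

theorem zdot_neg (z : Fin n → ℤ) (v : Fin n → ℕ) : zdot (-z) v = -zdot z v := by
  simp [zdot]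

theorem zdot_revVec (z : Fin n → ℤ) (v : Fin n → ℕ) : zdot z (revVec v) = zdot (revVec z) v :=
  Fintype.sum_equiv Fin.revPerm _ _ fun i => by simp [revVec]

variable {R : Type*} [CommSemiring R]

theorem monX_add (u v : Fin n → ℕ) :
    (monX (u + v) : MvPolynomial (Fin n) R) = monX u * monX v := by
  simp [monX, pow_add, Finset.prod_mul_distrib]

theorem monX_coe (d : Fin n →₀ ℕ) : (monX d : MvPolynomial (Fin n) R) = monomial d 1 := by
  rw [monomial_eq, C_1, one_mul, Finsupp.prod_fintype _ _ fun i => pow_zero _, monX]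

theorem eval_monX (y : Fin n → R) (v : Fin n → ℕ) : eval y (monX v) = ∏ i, y i ^ v i := by
  simp [monX]

theorem eval_monX_revVec (y : Fin n → R) (v : Fin n → ℕ) :
    eval y (monX (revVec v)) = eval (revVec y) (monX v) := by
  simp only [eval_monX, revVec]
  exact Fintype.prod_equiv Fin.revPerm _ _ fun i => by simp

end Monomials

section SymExponent

variable {n : ℕ} (z : Fin n → ℤ)

def symExponent (i : Fin n) : Option (Fin n) →₀ ℕ :=
  Finsupp.single none (z i).toNat + Finsupp.single (some i) 1 + Finsupp.single (some i.rev) 1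

theorem linearCombination_symExponent_none (d : Fin n →₀ ℕ) :
    Finsupp.linearCombination ℕ (symExponent z) d none = ∑ i, d i * (z i).toNat := by
  simp [Finsupp.linearCombination_apply, Finsupp.sum_fintype, symExponent]

theorem linearCombination_symExponent_some (d : Fin n →₀ ℕ) (j : Fin n) :
    Finsupp.linearCombination ℕ (symExponent z) d (some j) = d j + d j.rev := by
  simp [Finsupp.linearCombination_apply, Finsupp.sum_fintype, symExponent, Finsupp.single_apply,
    Finset.sum_add_distrib, Fin.rev_eq_iff]

theorem eval_monomial_symExponent {K : Type*} [CommSemiring K] (x : Option (Fin n) → K)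
    (i : Fin n) :
    eval x (monomial (symExponent z i) 1) = x none ^ (z i).toNat * x (some i) * x (some i.rev) := by
  rw [symExponent, ← mul_one (1 : K), ← monomial_mul, ← mul_one (1 : K), ← monomial_mul]
  simp [← X_pow_eq_monomial]

variable {z}

theorem zdot_eq_sum_toNat_mul (hz : ∀ i, z i.rev = -z i) (v : Fin n → ℕ) :
    zdot z v = ∑ i, ((z i).toNat : ℤ) * (v i - v i.rev) := by
  have hsplit (i : Fin n) : z i = (z i).toNat - (z i.rev).toNat := by
    rw [hz, Int.toNat_sub_toNat_neg]
  have hswap : ∑ i, ((z i.rev).toNat : ℤ) * v i = ∑ i, ((z i).toNat : ℤ) * v i.rev :=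
    Fintype.sum_equiv Fin.revPerm _ _ fun i => by simp
  simp only [zdot, mul_sub]
  conv_lhs => enter [2, i]; rw [hsplit i, sub_mul]
  rw [Finset.sum_sub_distrib, Finset.sum_sub_distrib, hswap]

theorem zdot_eq_linearCombination_symExponent (hz : ∀ i, z i.rev = -z i) (d : Fin n →₀ ℕ) :
    zdot z d = 2 * (Finsupp.linearCombination ℕ (symExponent z) d none : ℤ) -
      ∑ i, ((z i).toNat : ℤ) * Finsupp.linearCombination ℕ (symExponent z) d (some i) := by
  simp only [zdot_eq_sum_toNat_mul hz, linearCombination_symExponent_none,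
    linearCombination_symExponent_some, Nat.cast_sum, Nat.cast_mul, Nat.cast_add,
    Finset.mul_sum, ← Finset.sum_sub_distrib]
  exact Finset.sum_congr rfl fun i _ => by ring

end SymExponent

section Sibirsky

variable {l : ℕ} (p : Fin l → ℤ) (q : Fin l → ℕ)

theorem zeta_rev (i : Fin (2 * l)) : zeta p q i.rev = -zeta p q i := by
  have hi := i.isLt
  unfold zeta
  by_cases h : (i : ℕ) < l
  · rw [dif_neg (by simp only [Fin.val_rev]; omega), dif_pos h, neg_sub]
    congr <;> simp only [Fin.val_rev] <;> omega
  · rw [dif_pos (by simp only [Fin.val_rev]; omega), dif_neg h, neg_sub]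
    congr <;> simp only [Fin.val_rev] <;> omega

theorem revVec_zeta : revVec (zeta p q) = -zeta p q := funext (zeta_rev p q)

theorem monX_sub_monX_mem_sibirsky {R : Type*} [CommRing R] {ν μ : Fin (2 * l) → ℕ}
    (hz : zdot (zeta p q) ν = zdot (zeta p q) μ) (hs : ∀ i, ν i + ν i.rev = μ i + μ i.rev) :
    (monX ν - monX μ : MvPolynomial (Fin (2 * l)) R) ∈ sibirsky R p q := by
  have hrev : revVec (ν - μ) = μ - ν := funext fun i => by
    have := hs i
    simp only [revVec, Pi.sub_apply]
    omega
  have hν : ν = ν ⊓ μ + (ν - μ) := funext fun i => by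
    simp only [Pi.add_apply, Pi.inf_apply, Pi.sub_apply]
    omega
  have hμ : μ = ν ⊓ μ + revVec (ν - μ) := funext fun i => by
    simp only [hrev, Pi.add_apply, Pi.inf_apply, Pi.sub_apply]
    omega
  have hw : zdot (zeta p q) (ν - μ) = 0 := by
    have h1 := congrArg (zdot (zeta p q)) hν
    have h2 := congrArg (zdot (zeta p q)) hμ
    rw [zdot_add] at h1 h2
    rw [zdot_revVec, revVec_zeta, zdot_neg] at h2
    linarith
  have key : (monX ν - monX μ : MvPolynomial (Fin (2 * l)) R) =
      monX (ν ⊓ μ) * (monX (ν - μ) - monX (revVec (ν - μ))) := by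
    rw [mul_sub, ← monX_add, ← monX_add, ← hν, ← hμ]
  rw [key]
  exact Ideal.mul_mem_left _ _ (Ideal.subset_span ⟨_, hw, rfl⟩)

variable {K : Type*} [Field K]

theorem Ueta_apply (η : K) (x : Fin (2 * l) → K) (i : Fin (2 * l)) :
    Ueta p q η x i = η ^ (-zeta p q i) * x i := by
  unfold Ueta zeta
  split_ifs <;> rw [neg_sub]

theorem Ueta_one (x : Fin (2 * l) → K) : Ueta p q 1 x = x := by
  funext i
  rw [Ueta_apply, one_zpow, one_mul]

theorem Ueta_Ueta (η δ : K) (x : Fin (2 * l) → K) :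
    Ueta p q η (Ueta p q δ x) = Ueta p q (η * δ) x := by
  funext i
  simp only [Ueta_apply, mul_zpow, mul_assoc]

theorem revVec_Ueta (η : K) (x : Fin (2 * l) → K) :
    revVec (Ueta p q η x) = Ueta p q η⁻¹ (revVec x) := by
  funext i
  simp only [revVec, Ueta_apply, zeta_rev, inv_zpow', neg_neg]

theorem forall_revVec_mem_orbitU_iff {y : Fin (2 * l) → K} :
    (∀ z ∈ orbitU p q y, revVec z ∈ orbitU p q y) ↔ revVec y ∈ orbitU p q y := by
  refine ⟨fun h => h y ⟨1, one_ne_zero, (Ueta_one p q y).symm⟩, ?_⟩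
  rintro ⟨η, hη, hy⟩ z ⟨δ, hδ, rfl⟩
  exact ⟨δ⁻¹ * η, mul_ne_zero (inv_ne_zero hδ) hη, by rw [revVec_Ueta, hy, Ueta_Ueta]⟩

theorem eval_monX_Ueta {η : K} (hη : η ≠ 0) (y : Fin (2 * l) → K) (v : Fin (2 * l) → ℕ) :
    eval (Ueta p q η y) (monX v) = η ^ (-zdot (zeta p q) v) * eval y (monX v) := by
  have hpow (i : Fin (2 * l)) : (η ^ (-zeta p q i) * y i) ^ v i =
      η ^ (-(zeta p q i * v i)) * y i ^ v i := by
    rw [mul_pow, ← zpow_natCast (η ^ _), ← zpow_mul, neg_mul]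
  simp only [eval_monX, Ueta_apply, hpow, Finset.prod_mul_distrib,
    Finset.prod_zpow_eq_zpow_sum₀ hη, zdot, Finset.sum_neg_distrib]

theorem eval_eq_zero_of_mem_sibirsky {y : Fin (2 * l) → K} (hy : revVec y ∈ orbitU p q y)
    {f : MvPolynomial (Fin (2 * l)) K} (hf : f ∈ sibirsky K p q) : eval y f = 0 := by
  obtain ⟨η, hη, hrev⟩ := hy
  refine (Ideal.span_le (I := RingHom.ker (eval y))).2 ?_ hf
  rintro _ ⟨v, hv, rfl⟩
  simp [eval_monX_revVec, hrev, eval_monX_Ueta p q hη, hv]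

theorem mem_sibirsky_of_forall_eval_eq_zero [Infinite K] {f : MvPolynomial (Fin (2 * l)) K}
    (hf : ∀ y, revVec y ∈ orbitU p q y → eval y f = 0) : f ∈ sibirsky K p q := by
  refine mem_ideal_of_bind₁_monomial_one_eq_zero (symExponent (zeta p q)) (fun d d' h => ?_) ?_
  · rw [← monX_coe, ← monX_coe]
    refine monX_sub_monX_mem_sibirsky p q ?_ fun i => ?_
    · rw [zdot_eq_linearCombination_symExponent (zeta_rev p q),
        zdot_eq_linearCombination_symExponent (zeta_rev p q), h]
    · simpa only [linearCombination_symExponent_some] using congr($h (some i))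
  · refine funext_set (fun j => Option.elim j {0}ᶜ fun _ => Set.univ)
      (fun j => j.rec (Set.finite_singleton 0).infinite_compl fun _ => Set.infinite_univ)
      fun x hx => ?_
    have hx0 : x none ≠ 0 := hx none trivial
    rw [map_zero, eval_bind₁]
    simp only [eval_monomial_symExponent]
    refine hf _ ⟨x none, hx0, funext fun i => ?_⟩
    rw [revVec, Ueta_apply, zeta_rev, Fin.rev_rev, zpow_toNat_neg hx0]
    ring

end Sibirsky

theorem stmt18_general {l : ℕ} (p : Fin l → ℤ) (q : Fin l → ℕ) :
    {x : Fin (2 * l) → ℂ | ∀ f : MvPolynomial (Fin (2 * l)) ℂ,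
        (∀ y : Fin (2 * l) → ℂ,
          (∀ z ∈ orbitU p q y, revVec z ∈ orbitU p q y) → eval y f = 0) →
          eval x f = 0} =
      {x : Fin (2 * l) → ℂ | ∀ f ∈ sibirsky ℂ p q, eval x f = 0} := by
  simp only [forall_revVec_mem_orbitU_iff]
  ext x
  exact ⟨fun hx f hf => hx f fun y hy => eval_eq_zero_of_mem_sibirsky p q hy hf,
    fun hx f hf => hx f (mem_sibirsky_of_forall_eval_eq_zero p q hf)⟩

theorem stmt18 {l : ℕ} (hl : 0 < l) (p : Fin l → ℤ) (q : Fin l → ℕ)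
    (hp : ∀ k, -1 ≤ p k) (hpq : ∀ k, 0 ≤ p k + (q k : ℤ))
    (hdist : Function.Injective fun k => (p k, q k)) :
    {x : Fin (2 * l) → ℂ | ∀ f : MvPolynomial (Fin (2 * l)) ℂ,
        (∀ y : Fin (2 * l) → ℂ,
          (∀ z ∈ orbitU p q y, revVec z ∈ orbitU p q y) → eval y f = 0) →
          eval x f = 0} =
      {x : Fin (2 * l) → ℂ | ∀ f ∈ sibirsky ℂ p q, eval x f = 0} :=
  stmt18_general p q
end
end
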